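/- Let m be the Mills ratio of the standard normal law. For all x, y > 0 one has the chain of inequalities √((x+y)/(2xy)) · m(√(2xy/(x+y))) ≥ (√y · m(√x) + √x · m(√y))/(2√(xy)) ≥ √(2/(x+y)) · m(√((x+y)/2)) ≥ (√x · m(√x) + √y · m(√y))/(x+y), and in each inequality equality holds if and only if x = y. -/

import Mathlib

/-!
Put `g t = m(√t) / √t` and `ψ t = t g t = √t m(√t)`. The four quantities are `g H`,
`(g x + g y) / 2`, `g A` and `(ψ x + ψ y) / (x + y)`, where `H` and `A` are the harmonic and the
arithmetic mean of `x` and `y`. So the middle inequality is the strict convexity of `g`, and the two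
outer ones are the strict concavity of `ψ`: at the midpoint, and with the weights `y / (x + y)`,
`x / (x + y)`, which combine `x` and `y` into `H`.

Through the equation `m' = s m - 1`, the signs of the second derivatives of `g` and `ψ` come down
to the bounds `s / (s² + 1) < m s < (s² + 2) / (s (s² + 3))`. Each bound `r` is a strict sub- or
supersolution of that equation, so `φ (r - m)` is strictly monotone on `[s, ∞)`; it tends to `0`,
which fixes its sign at `s`.
-/

/-- The standard normal probability density function. -/
noncomputable def stdNormalPDF (t : ℝ) : ℝ := Real.exp (-t ^ 2 / 2) / Real.sqrt (2 * Real.pi)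

/-- The Mills ratio of the standard normal distribution: survival function over density. -/
noncomputable def millsRatio (x : ℝ) : ℝ := (∫ t in Set.Ioi x, stdNormalPDF t) / stdNormalPDF x

open Real Set Filter Topology MeasureTheory

section IntegralIoi

variable {E : Type*} [NormedAddCommGroup E] [NormedSpace ℝ E] {f : ℝ → E}

theorem integral_Ioi_eq_sub_intervalIntegral (hf : Integrable f) (a x : ℝ) :
    ∫ t in Ioi x, f t = (∫ t in Ioi a, f t) - ∫ t in a..x, f t := by
  rw [← intervalIntegral.integral_Ioi_sub_Ioi' hf.integrableOn hf.integrableOn, sub_sub_cancel]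

theorem hasDerivAt_integral_Ioi [CompleteSpace E] (hf : Integrable f) {x : ℝ}
    (hfx : ContinuousAt f x) :
    HasDerivAt (fun a ↦ ∫ t in Ioi a, f t) (-f x) x := by
  rw [funext (integral_Ioi_eq_sub_intervalIntegral hf 0)]
  refine (intervalIntegral.integral_hasDerivAt_right hf.intervalIntegrable
    hf.aestronglyMeasurable.stronglyMeasurableAtFilter hfx).const_sub _ |>.congr_deriv ?_
  simp

theorem tendsto_integral_Ioi_atTop [CompleteSpace E] (hf : Integrable f) :
    Tendsto (fun a ↦ ∫ t in Ioi a, f t) atTop (𝓝 0) := by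
  rw [funext (integral_Ioi_eq_sub_intervalIntegral hf 0)]
  simpa using (intervalIntegral_tendsto_integral_Ioi 0 hf.integrableOn tendsto_id).const_sub
    (∫ t in Ioi 0, f t)

end IntegralIoi

theorem StrictMonoOn.lt_of_tendsto_atTop {α β : Type*} [LinearOrder α] [NoMaxOrder α]
    [Preorder β] [TopologicalSpace β] [OrderClosedTopology β] {f : α → β} {a : α} {L : β}
    (hf : StrictMonoOn f (Ici a)) (hL : Tendsto f atTop (𝓝 L)) : f a < L := by
  have : Nonempty α := ⟨a⟩
  obtain ⟨b, hab⟩ := exists_gt a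
  refine (hf self_mem_Ici hab.le hab).trans_le (ge_of_tendsto hL ?_)
  filter_upwards [eventually_ge_atTop b] with t hbt
  exact hf.monotoneOn hab.le (hab.le.trans hbt) hbt

theorem stdNormalPDF_pos (t : ℝ) : 0 < stdNormalPDF t := by
  unfold stdNormalPDF
  positivity

theorem hasDerivAt_stdNormalPDF (t : ℝ) : HasDerivAt stdNormalPDF (-t * stdNormalPDF t) t := by
  refine (((hasDerivAt_pow 2 t).neg.div_const 2).exp.div_const √(2 * π)).congr_deriv ?_
  simp only [stdNormalPDF, Pi.neg_apply]
  ring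

theorem continuous_stdNormalPDF : Continuous stdNormalPDF := by
  unfold stdNormalPDF
  fun_prop

theorem integrable_stdNormalPDF : Integrable stdNormalPDF := by
  refine ((integrable_exp_neg_mul_sq (by norm_num : (0 : ℝ) < 1 / 2)).div_const
    √(2 * π)).congr (ae_of_all _ fun t ↦ ?_)
  unfold stdNormalPDF
  ring_nf

theorem tendsto_stdNormalPDF_atTop : Tendsto stdNormalPDF atTop (𝓝 0) := by
  have h : Tendsto (fun t : ℝ ↦ -t ^ 2 / 2) atTop atBot :=
    (tendsto_neg_atTop_atBot.comp (tendsto_pow_atTop two_ne_zero)).atBot_div_const two_pos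
  unfold stdNormalPDF
  simpa only [Function.comp_def, zero_div] using (tendsto_exp_atBot.comp h).div_const √(2 * π)

theorem stdNormalPDF_mul_millsRatio (x : ℝ) :
    stdNormalPDF x * millsRatio x = ∫ t in Ioi x, stdNormalPDF t :=
  mul_div_cancel₀ _ (stdNormalPDF_pos x).ne'

theorem millsRatio_pos (x : ℝ) : 0 < millsRatio x := by
  refine div_pos ?_ (stdNormalPDF_pos x)
  rw [setIntegral_pos_iff_support_of_nonneg_ae (ae_of_all _ fun t ↦ (stdNormalPDF_pos t).le)
    integrable_stdNormalPDF.integrableOn,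
    Function.support_eq_univ fun t ↦ (stdNormalPDF_pos t).ne', univ_inter]
  simp

theorem hasDerivAt_millsRatio (x : ℝ) : HasDerivAt millsRatio (x * millsRatio x - 1) x := by
  refine ((hasDerivAt_integral_Ioi integrable_stdNormalPDF continuous_stdNormalPDF.continuousAt).div
    (hasDerivAt_stdNormalPDF x) (stdNormalPDF_pos x).ne').congr_deriv ?_
  have := (stdNormalPDF_pos x).ne'
  rw [← stdNormalPDF_mul_millsRatio]
  field_simp
  ring

theorem tendsto_stdNormalPDF_mul_millsRatio_atTop :
    Tendsto (fun x ↦ stdNormalPDF x * millsRatio x) atTop (𝓝 0) := by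
  simpa only [stdNormalPDF_mul_millsRatio] using tendsto_integral_Ioi_atTop integrable_stdNormalPDF

theorem hasDerivAt_stdNormalPDF_mul_sub_millsRatio {r : ℝ → ℝ} {r' t : ℝ}
    (hr : HasDerivAt r r' t) :
    HasDerivAt (fun t ↦ stdNormalPDF t * (r t - millsRatio t))
      (stdNormalPDF t * (r' - (t * r t - 1))) t :=
  ((hasDerivAt_stdNormalPDF t).mul (hr.sub (hasDerivAt_millsRatio t))).congr_deriv
    (by simp only [Pi.sub_apply]; ring)

theorem tendsto_stdNormalPDF_mul_sub_millsRatio {r : ℝ → ℝ}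
    (hr : Tendsto (fun t ↦ stdNormalPDF t * r t) atTop (𝓝 0)) :
    Tendsto (fun t ↦ stdNormalPDF t * (r t - millsRatio t)) atTop (𝓝 0) := by
  simpa only [mul_sub, sub_zero] using hr.sub tendsto_stdNormalPDF_mul_millsRatio_atTop

theorem lt_millsRatio_of_hasDerivAt {r r' : ℝ → ℝ} {a : ℝ}
    (hr : ∀ t, a ≤ t → HasDerivAt r (r' t) t) (hsub : ∀ t, a < t → t * r t - 1 < r' t)
    (hlim : Tendsto (fun t ↦ stdNormalPDF t * r t) atTop (𝓝 0)) : r a < millsRatio a := by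
  have hf t (ht : a ≤ t) := hasDerivAt_stdNormalPDF_mul_sub_millsRatio (hr t ht)
  have hmono : StrictMonoOn (fun t ↦ stdNormalPDF t * (r t - millsRatio t)) (Ici a) := by
    refine strictMonoOn_of_deriv_pos (convex_Ici a)
      (fun t ht ↦ (hf t ht).continuousAt.continuousWithinAt) fun t ht ↦ ?_
    rw [interior_Ici] at ht
    rw [(hf t (le_of_lt ht)).deriv]
    exact mul_pos (stdNormalPDF_pos t) (sub_pos.2 (hsub t ht))
  have hneg := hmono.lt_of_tendsto_atTop (tendsto_stdNormalPDF_mul_sub_millsRatio hlim)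
  exact sub_neg.1 (neg_of_mul_neg_right hneg (stdNormalPDF_pos a).le)

theorem millsRatio_lt_of_hasDerivAt {r r' : ℝ → ℝ} {a : ℝ}
    (hr : ∀ t, a ≤ t → HasDerivAt r (r' t) t) (hsuper : ∀ t, a < t → r' t < t * r t - 1)
    (hlim : Tendsto (fun t ↦ stdNormalPDF t * r t) atTop (𝓝 0)) : millsRatio a < r a := by
  have hf t (ht : a ≤ t) : HasDerivAt (fun t ↦ -(stdNormalPDF t * (r t - millsRatio t)))
      (-(stdNormalPDF t * (r' t - (t * r t - 1)))) t :=
    (hasDerivAt_stdNormalPDF_mul_sub_millsRatio (hr t ht)).neg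
  have hmono : StrictMonoOn (fun t ↦ -(stdNormalPDF t * (r t - millsRatio t))) (Ici a) := by
    refine strictMonoOn_of_deriv_pos (convex_Ici a)
      (fun t ht ↦ (hf t ht).continuousAt.continuousWithinAt) fun t ht ↦ ?_
    rw [interior_Ici] at ht
    rw [(hf t (le_of_lt ht)).deriv, neg_pos]
    exact mul_neg_of_pos_of_neg (stdNormalPDF_pos t) (sub_neg.2 (hsuper t ht))
  have hneg := hmono.lt_of_tendsto_atTop (by
    simpa using (tendsto_stdNormalPDF_mul_sub_millsRatio hlim).neg)
  exact sub_pos.1 (pos_of_mul_pos_right (neg_neg_iff_pos.1 hneg) (stdNormalPDF_pos a).le)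

theorem div_sq_add_one_lt_millsRatio (s : ℝ) : s / (s ^ 2 + 1) < millsRatio s := by
  refine lt_millsRatio_of_hasDerivAt (r := fun t ↦ t / (t ^ 2 + 1))
    (r' := fun t ↦ (1 - t ^ 2) / (t ^ 2 + 1) ^ 2) (fun t _ ↦ ?_) (fun t _ ↦ ?_) ?_
  · refine ((hasDerivAt_id' t).div ((hasDerivAt_pow 2 t).add_const 1)
      (by positivity)).congr_deriv ?_
    field_simp
    ring
  · have h : (1 - t ^ 2) / (t ^ 2 + 1) ^ 2 - (t * (t / (t ^ 2 + 1)) - 1) =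
        2 / (t ^ 2 + 1) ^ 2 := by
      field_simp
      ring
    linarith [show 0 < 2 / (t ^ 2 + 1) ^ 2 by positivity]
  · refine tendsto_stdNormalPDF_atTop.zero_mul_isBoundedUnder_le
      (isBoundedUnder_of_eventually_le (a := 1) (Eventually.of_forall fun t ↦ ?_))
    rw [Function.comp_apply, norm_div, norm_of_nonneg (by positivity : (0 : ℝ) ≤ t ^ 2 + 1),
      div_le_one (by positivity), norm_eq_abs]
    nlinarith [abs_nonneg t, sq_abs t]

theorem millsRatio_lt_of_pos {s : ℝ} (hs : 0 < s) :
    millsRatio s < (s ^ 2 + 2) / (s * (s ^ 2 + 3)) := by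
  refine millsRatio_lt_of_hasDerivAt (r := fun t ↦ (t ^ 2 + 2) / (t * (t ^ 2 + 3)))
    (r' := fun t ↦ -(t ^ 4 + 3 * t ^ 2 + 6) / (t * (t ^ 2 + 3)) ^ 2)
    (fun t ht ↦ ?_) (fun t ht ↦ ?_) ?_
  · have ht : 0 < t := hs.trans_le ht
    have hden : HasDerivAt (fun t ↦ t * (t ^ 2 + 3)) (3 * t ^ 2 + 3) t :=
      ((hasDerivAt_id' t).mul ((hasDerivAt_pow 2 t).add_const 3)).congr_deriv (by ring)
    refine (((hasDerivAt_pow 2 t).add_const 2).div hden (by positivity)).congr_deriv ?_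
    field_simp
    ring
  · have ht : 0 < t := hs.trans ht
    have h : t * ((t ^ 2 + 2) / (t * (t ^ 2 + 3))) - 1 -
        -(t ^ 4 + 3 * t ^ 2 + 6) / (t * (t ^ 2 + 3)) ^ 2 = 6 / (t * (t ^ 2 + 3)) ^ 2 := by
      field_simp
      ring
    linarith [show 0 < 6 / (t * (t ^ 2 + 3)) ^ 2 by positivity]
  · refine tendsto_stdNormalPDF_atTop.zero_mul_isBoundedUnder_le
      (isBoundedUnder_of_eventually_le (a := 1) ?_)
    filter_upwards [eventually_ge_atTop 1] with t ht
    rw [Function.comp_apply, Real.norm_of_nonneg (by positivity), div_le_one (by positivity)]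
    nlinarith

theorem millsRatio_mul_lt_of_pos {s : ℝ} (hs : 0 < s) :
    millsRatio s * (s ^ 4 + 2 * s ^ 2 - 1) < s ^ 3 + s := by
  have hub := (lt_div_iff₀ (by positivity)).1 (millsRatio_lt_of_pos hs)
  rcases le_or_gt (s ^ 4 + 2 * s ^ 2 - 1) 0 with h | h
  · nlinarith [millsRatio_pos s]
  · nlinarith [mul_lt_mul_of_pos_right hub h]

theorem lt_millsRatio_mul_of_pos {s : ℝ} (hs : 0 < s) :
    s ^ 3 - 3 * s < millsRatio s * (s ^ 4 - 2 * s ^ 2 + 3) := by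
  have hlb := (div_lt_iff₀ (by positivity)).1 (div_sq_add_one_lt_millsRatio s)
  have hP : (0 : ℝ) < s ^ 4 - 2 * s ^ 2 + 3 := by nlinarith [sq_nonneg (s ^ 2 - 1)]
  have h : 0 < (millsRatio s * (s ^ 4 - 2 * s ^ 2 + 3) - (s ^ 3 - 3 * s)) * (s ^ 2 + 1) := by
    nlinarith [mul_pos (sub_pos.2 hlb) hP]
  exact sub_pos.1 (pos_of_mul_pos_left h (by positivity))

theorem hasDerivAt_comp_sqrt {F G : ℝ → ℝ} {t : ℝ} (ht : 0 < t)
    (hF : HasDerivAt F (2 * √t * G √t) √t) : HasDerivAt (fun t ↦ F √t) (G √t) t := by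
  refine (hF.comp t (hasDerivAt_sqrt ht.ne')).congr_deriv ?_
  have := (sqrt_pos.2 ht).ne'
  field_simp

theorem StrictMonoOn.strictConvexOn_comp_sqrt {F G : ℝ → ℝ} (hG : StrictMonoOn G (Ioi 0))
    (hF : ∀ s, 0 < s → HasDerivAt F (2 * s * G s) s) :
    StrictConvexOn ℝ (Ioi 0) (fun t ↦ F √t) := by
  have hd t (ht : 0 < t) := hasDerivAt_comp_sqrt ht (hF _ (sqrt_pos.2 ht))
  refine StrictMonoOn.strictConvexOn_of_deriv (convex_Ioi 0)
    (fun t ht ↦ (hd t ht).continuousAt.continuousWithinAt) ?_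
  rw [interior_Ioi]
  intro a ha b hb hab
  rw [(hd a ha).deriv, (hd b hb).deriv]
  exact hG (sqrt_pos.2 ha) (sqrt_pos.2 hb) (sqrt_lt_sqrt (le_of_lt ha) hab)

theorem StrictAntiOn.strictConcaveOn_comp_sqrt {F G : ℝ → ℝ} (hG : StrictAntiOn G (Ioi 0))
    (hF : ∀ s, 0 < s → HasDerivAt F (2 * s * G s) s) :
    StrictConcaveOn ℝ (Ioi 0) (fun t ↦ F √t) := by
  have h := hG.neg.strictConvexOn_comp_sqrt (F := fun s ↦ -F s) fun s hs ↦
    (hF s hs).neg.congr_deriv (by ring)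
  simpa only [Pi.neg_def, neg_neg] using h.neg

theorem strictConcaveOn_sqrt_mul_millsRatio_sqrt :
    StrictConcaveOn ℝ (Ioi 0) (fun t ↦ √t * millsRatio √t) := by
  set G : ℝ → ℝ := fun s ↦ ((1 + s ^ 2) * millsRatio s - s) / (2 * s)
  have hG' s (hs : 0 < s) : HasDerivAt G
      ((millsRatio s * (s ^ 4 + 2 * s ^ 2 - 1) - (s ^ 3 + s)) / (2 * s ^ 2)) s := by
    have hnum : HasDerivAt (fun s ↦ (1 + s ^ 2) * millsRatio s - s)
        (2 * s * millsRatio s + (1 + s ^ 2) * (s * millsRatio s - 1) - 1) s := by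
      refine (((hasDerivAt_pow 2 s).const_add 1).mul (hasDerivAt_millsRatio s)).sub
        (hasDerivAt_id' s) |>.congr_deriv ?_
      push_cast
      ring
    refine (hnum.div ((hasDerivAt_id' s).const_mul 2) (by positivity)).congr_deriv ?_
    field_simp
    ring
  have hG : StrictAntiOn G (Ioi 0) := by
    refine strictAntiOn_of_deriv_neg (convex_Ioi 0)
      (fun s hs ↦ (hG' s hs).continuousAt.continuousWithinAt) fun s hs ↦ ?_
    rw [interior_Ioi, mem_Ioi] at hs
    rw [(hG' s hs).deriv]
    exact div_neg_of_neg_of_pos (sub_neg.2 (millsRatio_mul_lt_of_pos hs)) (by positivity)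
  refine hG.strictConcaveOn_comp_sqrt (F := fun s ↦ s * millsRatio s) fun s hs ↦ ?_
  refine ((hasDerivAt_id' s).mul (hasDerivAt_millsRatio s)).congr_deriv ?_
  simp only [G]
  field_simp
  ring

theorem strictConvexOn_millsRatio_sqrt_div_sqrt :
    StrictConvexOn ℝ (Ioi 0) (fun t ↦ millsRatio √t / √t) := by
  set G : ℝ → ℝ := fun s ↦ (s ^ 2 * millsRatio s - s - millsRatio s) / (2 * s ^ 3)
  have hG' s (hs : 0 < s) : HasDerivAt G
      ((millsRatio s * (s ^ 4 - 2 * s ^ 2 + 3) - (s ^ 3 - 3 * s)) / (2 * s ^ 4)) s := by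
    have hnum : HasDerivAt (fun s ↦ s ^ 2 * millsRatio s - s - millsRatio s)
        (2 * s * millsRatio s + s ^ 2 * (s * millsRatio s - 1) - 1 - (s * millsRatio s - 1))
        s := by
      refine (((hasDerivAt_pow 2 s).mul (hasDerivAt_millsRatio s)).sub
        (hasDerivAt_id' s)).sub (hasDerivAt_millsRatio s) |>.congr_deriv ?_
      push_cast
      ring
    refine (hnum.div ((hasDerivAt_pow 3 s).const_mul 2) (by positivity)).congr_deriv ?_
    field_simp
    ring
  have hG : StrictMonoOn G (Ioi 0) := by
    refine strictMonoOn_of_deriv_pos (convex_Ioi 0)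
      (fun s hs ↦ (hG' s hs).continuousAt.continuousWithinAt) fun s hs ↦ ?_
    rw [interior_Ioi, mem_Ioi] at hs
    rw [(hG' s hs).deriv]
    exact div_pos (sub_pos.2 (lt_millsRatio_mul_of_pos hs)) (by positivity)
  refine hG.strictConvexOn_comp_sqrt (F := fun s ↦ millsRatio s / s) fun s hs ↦ ?_
  refine ((hasDerivAt_millsRatio s).div (hasDerivAt_id' s) hs.ne').congr_deriv ?_
  simp only [G]
  field_simp

theorem StrictConvexOn.map_add_div_two_lt {f : ℝ → ℝ} {s : Set ℝ} {x y : ℝ}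
    (hf : StrictConvexOn ℝ s f) (hx : x ∈ s) (hy : y ∈ s) (hxy : x ≠ y) :
    f ((x + y) / 2) < (f x + f y) / 2 := by
  have h := hf.2 hx hy hxy (by norm_num : (0 : ℝ) < 1 / 2) (by norm_num : (0 : ℝ) < 1 / 2)
    (by norm_num)
  simp only [smul_eq_mul] at h
  calc f ((x + y) / 2) = f (1 / 2 * x + 1 / 2 * y) := by congr 1; ring
    _ < 1 / 2 * f x + 1 / 2 * f y := h
    _ = (f x + f y) / 2 := by ring

theorem StrictConcaveOn.add_div_two_lt_map {f : ℝ → ℝ} {s : Set ℝ} {x y : ℝ}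
    (hf : StrictConcaveOn ℝ s f) (hx : x ∈ s) (hy : y ∈ s) (hxy : x ≠ y) :
    (f x + f y) / 2 < f ((x + y) / 2) := by
  have h := hf.neg.map_add_div_two_lt hx hy hxy
  simp only [Pi.neg_apply] at h
  linarith

theorem StrictConcaveOn.add_div_add_lt_div_arithMean {f : ℝ → ℝ} {s : Set ℝ} {x y : ℝ}
    (hf : StrictConcaveOn ℝ s f) (hx : x ∈ s) (hy : y ∈ s) (hxy : x ≠ y)
    (hpos : 0 < x + y) :
    (f x + f y) / (x + y) < f ((x + y) / 2) / ((x + y) / 2) := by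
  rw [lt_div_iff₀ (by positivity)]
  calc (f x + f y) / (x + y) * ((x + y) / 2) = (f x + f y) / 2 := by field_simp
    _ < f ((x + y) / 2) := hf.add_div_two_lt_map hx hy hxy

theorem StrictConcaveOn.avg_div_lt_div_harmonicMean {f : ℝ → ℝ} {x y : ℝ}
    (hf : StrictConcaveOn ℝ (Ioi 0) f) (hx : 0 < x) (hy : 0 < y) (hxy : x ≠ y) :
    (f x / x + f y / y) / 2 < f (2 * x * y / (x + y)) / (2 * x * y / (x + y)) := by
  have hsum : 0 < x + y := add_pos hx hy
  have h := hf.2 hx hy hxy (div_pos hy hsum) (div_pos hx hsum) (by field_simp; ring)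
  simp only [smul_eq_mul] at h
  rw [lt_div_iff₀ (by positivity)]
  calc (f x / x + f y / y) / 2 * (2 * x * y / (x + y))
        = y / (x + y) * f x + x / (x + y) * f y := by field_simp
    _ < f (y / (x + y) * x + x / (x + y) * y) := h
    _ = f (2 * x * y / (x + y)) := by congr 1; ring

theorem sqrt_mul_div_self (t c : ℝ) : √t * c / t = c / √t := by
  rw [mul_comm, mul_div_assoc, sqrt_div_self', mul_one_div]

/-- For all `x, y > 0`, the chain of inequalities
`√((x+y)/(2xy)) m(√(2xy/(x+y))) ≥ (√y m(√x) + √x m(√y))/(2√(xy))`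
`≥ √(2/(x+y)) m(√((x+y)/2)) ≥ (√x m(√x) + √y m(√y))/(x+y)`
holds for the Mills ratio `m` of the standard normal law, and in each inequality
equality holds if and only if `x = y`. -/
theorem millsRatio_sqrt_chain_of_inequalities (x y : ℝ) (hx : 0 < x) (hy : 0 < y) :
    (Real.sqrt ((x + y) / (2 * x * y)) * millsRatio (Real.sqrt (2 * x * y / (x + y))) ≥
        (Real.sqrt y * millsRatio (Real.sqrt x) + Real.sqrt x * millsRatio (Real.sqrt y)) /
          (2 * Real.sqrt (x * y)) ∧
      (Real.sqrt y * millsRatio (Real.sqrt x) + Real.sqrt x * millsRatio (Real.sqrt y)) /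
          (2 * Real.sqrt (x * y)) ≥
        Real.sqrt (2 / (x + y)) * millsRatio (Real.sqrt ((x + y) / 2)) ∧
      Real.sqrt (2 / (x + y)) * millsRatio (Real.sqrt ((x + y) / 2)) ≥
        (Real.sqrt x * millsRatio (Real.sqrt x) + Real.sqrt y * millsRatio (Real.sqrt y)) /
          (x + y)) ∧
    ((Real.sqrt ((x + y) / (2 * x * y)) * millsRatio (Real.sqrt (2 * x * y / (x + y))) =
        (Real.sqrt y * millsRatio (Real.sqrt x) + Real.sqrt x * millsRatio (Real.sqrt y)) /
          (2 * Real.sqrt (x * y)) ↔ x = y) ∧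
      ((Real.sqrt y * millsRatio (Real.sqrt x) + Real.sqrt x * millsRatio (Real.sqrt y)) /
          (2 * Real.sqrt (x * y)) =
        Real.sqrt (2 / (x + y)) * millsRatio (Real.sqrt ((x + y) / 2)) ↔ x = y) ∧
      (Real.sqrt (2 / (x + y)) * millsRatio (Real.sqrt ((x + y) / 2)) =
        (Real.sqrt x * millsRatio (Real.sqrt x) + Real.sqrt y * millsRatio (Real.sqrt y)) /
          (x + y) ↔ x = y)) := by
  have hB : (√y * millsRatio √x + √x * millsRatio √y) / (2 * √(x * y)) =
      (millsRatio √x / √x + millsRatio √y / √y) / 2 := by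
    have := (sqrt_pos.2 hx).ne'
    have := (sqrt_pos.2 hy).ne'
    rw [sqrt_mul hx.le]
    field_simp
  rw [← inv_div (2 * x * y) (x + y), ← inv_div (x + y) 2, sqrt_inv, sqrt_inv, inv_mul_eq_div,
    inv_mul_eq_div, hB]
  rcases eq_or_ne x y with rfl | hne
  · have hD :
        (√x * millsRatio √x + √x * millsRatio √x) / (x + x) = millsRatio √x / √x := by
      rw [← sqrt_mul_div_self]
      field_simp
    rw [show 2 * x * x / (x + x) = x by field_simp; ring, show (x + x) / 2 = x by ring, hD]
    simp
  have h1 := strictConcaveOn_sqrt_mul_millsRatio_sqrt.avg_div_lt_div_harmonicMean hx hy hne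
  have h2 := strictConvexOn_millsRatio_sqrt_div_sqrt.map_add_div_two_lt hx hy hne
  have h3 := strictConcaveOn_sqrt_mul_millsRatio_sqrt.add_div_add_lt_div_arithMean hx hy hne
    (add_pos hx hy)
  simp only [sqrt_mul_div_self] at h1 h3
  exact ⟨⟨h1.le, h2.le, h3.le⟩, iff_of_false h1.ne' hne, iff_of_false h2.ne' hne,
    iff_of_false h3.ne' hne⟩
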